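/- arXiv:1109.1844 — 6 statements merged into one kernel-verified Lean document; each statement's English description precedes it below -/
import Mathlib

section
/- Let C = {C_1, …, C_k} be a k-clustering of (X, s) that is separation-uniform with parameter λ (i.e., s(x,y) = λ for all x ≁_C y). Then for every weight function w on X, rcut(C, w[X], s) = (λ/2)·(k−1)·w(X). -/
open Finset

/-- A weight function assigns a positive real weight to every point. -/
def IsWeight {X : Type*} (w : X → ℝ) : Prop := ∀ x, 0 < w x

/-- A k-clustering: a partition of `X` into `k` pairwise disjoint nonempty parts. -/
def IsClustering {X : Type*} [Fintype X] [DecidableEq X]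
    (C : Finset (Finset X)) (k : ℕ) : Prop :=
  C.card = k ∧ (∀ A ∈ C, A.Nonempty) ∧
  (∀ A ∈ C, ∀ B ∈ C, A ≠ B → Disjoint A B) ∧
  (∀ x : X, ∃ A ∈ C, x ∈ A)

/-- `x ∼_C y`: `x` and `y` lie in the same cluster of `C`. -/
def SameCluster {X : Type*} [DecidableEq X] (C : Finset (Finset X)) (x y : X) : Prop :=
  ∃ A ∈ C, x ∈ A ∧ y ∈ A

/-- The ratio-cut cost of a clustering `C` of weighted data `(w[X], s)`. -/
noncomputable def rcut {X : Type*} [Fintype X] [DecidableEq X]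
    (C : Finset (Finset X)) (w : X → ℝ) (s : X → X → ℝ) : ℝ :=
  (1 / 2) * ∑ A ∈ C, (∑ x ∈ A, ∑ y ∈ Aᶜ, s x y * w x * w y) / (∑ x ∈ A, w x)

/-! Under separation-uniformity the cut of a cluster `A` is `λ · w(A) · w(Aᶜ)`, so its ratio term
is `λ · (w(X) - w(A))`; summing over the `k` clusters, whose weights add up to `w(X)`, gives
`λ · (k - 1) · w(X)`. -/

theorem IsWeight.sum_pos {X : Type*} {w : X → ℝ} (hw : IsWeight w) {A : Finset X}
    (hA : A.Nonempty) : 0 < ∑ x ∈ A, w x :=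
  Finset.sum_pos (fun x _ => hw x) hA

section Clustering

variable {X : Type*} [Fintype X] [DecidableEq X]

theorem sum_sum_compl_mul_mul_of_forall_eq {A : Finset X} {s : X → X → ℝ} {lam : ℝ}
    (h : ∀ x ∈ A, ∀ y ∉ A, s x y = lam) (w : X → ℝ) :
    ∑ x ∈ A, ∑ y ∈ Aᶜ, s x y * w x * w y = lam * (∑ x ∈ A, w x) * ∑ y ∈ Aᶜ, w y := by
  rw [mul_assoc, sum_mul_sum, mul_sum]
  refine sum_congr rfl fun x hx => ?_
  rw [mul_sum]
  refine sum_congr rfl fun y hy => ?_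
  rw [h x hx y (mem_compl.mp hy)]
  ring

namespace IsClustering

variable {C : Finset (Finset X)} {k : ℕ}

theorem not_sameCluster (hC : IsClustering C k) {A : Finset X} (hA : A ∈ C) {x y : X}
    (hx : x ∈ A) (hy : y ∉ A) : ¬ SameCluster C x y := by
  rintro ⟨B, hB, hxB, hyB⟩
  obtain rfl | hAB := eq_or_ne A B
  · exact hy hyB
  · exact disjoint_left.mp (hC.2.2.1 A hA B hB hAB) hx hxB

theorem sum_sum_eq_sum (hC : IsClustering C k) (w : X → ℝ) :
    ∑ A ∈ C, ∑ x ∈ A, w x = ∑ x, w x := by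
  rw [← sum_biUnion hC.2.2.1]
  congr
  exact eq_univ_of_forall fun x => mem_biUnion.mpr (hC.2.2.2 x)

end IsClustering

end Clustering

theorem rcut_of_separationUniform_general {X : Type*} [Fintype X] [DecidableEq X]
    (s : X → X → ℝ)
    (k : ℕ)
    (C : Finset (Finset X)) (hC : IsClustering C k)
    (lam : ℝ) (hsep : ∀ x y : X, ¬ SameCluster C x y → s x y = lam)
    (w : X → ℝ) (hw : IsWeight w) :
    rcut C w s = (lam / 2) * ((k : ℝ) - 1) * ∑ x, w x := by
  have hterm : ∀ A ∈ C, (∑ x ∈ A, ∑ y ∈ Aᶜ, s x y * w x * w y) / (∑ x ∈ A, w x)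
      = lam * ((∑ x, w x) - ∑ x ∈ A, w x) := fun A hA => by
    have hcut : ∀ x ∈ A, ∀ y ∉ A, s x y = lam := fun x hx y hy =>
      hsep x y (hC.not_sameCluster hA hx hy)
    have hwA := (hw.sum_pos (hC.2.1 A hA)).ne'
    rw [sum_sum_compl_mul_mul_of_forall_eq hcut, ← sum_add_sum_compl A w]
    field_simp
    ring
  rw [rcut, sum_congr rfl hterm, ← mul_sum, sum_sub_distrib, sum_const, hC.sum_sum_eq_sum,
    hC.1, nsmul_eq_mul]
  ring

/-- if `C` is separation-uniform with parameter `lam`, then for every weight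
function `w`, `rcut(C, w[X], s) = (lam/2) * (k - 1) * w(X)`. -/
theorem rcut_of_separationUniform {X : Type*} [Fintype X] [DecidableEq X]
    (s : X → X → ℝ) (hsym : ∀ x y, s x y = s y x) (hnn : ∀ x y, 0 ≤ s x y)
    (k : ℕ) (hk1 : 1 < k) (hk2 : k < Fintype.card X)
    (C : Finset (Finset X)) (hC : IsClustering C k)
    (lam : ℝ) (hsep : ∀ x y : X, ¬ SameCluster C x y → s x y = lam)
    (w : X → ℝ) (hw : IsWeight w) :
    rcut C w s = (lam / 2) * ((k : ℝ) - 1) * ∑ x, w x :=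
  rcut_of_separationUniform_general s k C hC lam hsep w hw
end

section
/- Let C = {C_1, …, C_k} be a k-clustering of (X, s). Suppose there are distinct clusters C_1, C_2 with |C_2| ≥ 2, a point x ∈ C_1 and a point y ∈ C_2 such that s(x,y) ≥ s(x,z) for all z ∈ C_2 and s(x,y) > s(x,a) for some a ∈ C_2. For W > 0 let w_W be the weight function with w_W(x) = W and w_W(z) = 1 for all z ≠ x, and let C' be the k-clustering obtained from C by moving y from C_2 to C_1 (i.e., replacing C_1 by C_1 ∪ {y} and C_2 by C_2 \ {y}). Then there exists W_0 > 0 such that for all W ≥ W_0, rcut(C', w_W[X], s) < rcut(C, w_W[X], s). -/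
/-!
Put weight `W` on `x` and weight `1` elsewhere. A cluster not containing `x` then has ratio-cut
cost `W · (average similarity of its points to x) + O(1)`, while a cluster containing `x` has cost
between `0` and a bound independent of `W ≥ 1`. Moving `y` lowers the average similarity to `x`
over `C₂`, because `s(x,y)` is strictly above that average, so the cost of the second cluster drops
by a positive multiple of `W`; this outweighs the bounded change of the first cluster.
-/

open Finset

/-- `C` is perfect: within-cluster similarities all exceed between-cluster similarities. -/
def IsPerfect {X : Type*} [DecidableEq X] (C : Finset (Finset X)) (s : X → X → ℝ) : Prop :=
  ∀ x₁ x₂ x₃ x₄ : X, SameCluster C x₁ x₂ → ¬ SameCluster C x₃ x₄ → s x₃ x₄ < s x₁ x₂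

/-- `C` is separation-uniform: all between-cluster similarities are equal. -/
def IsSeparationUniform {X : Type*} [DecidableEq X]
    (C : Finset (Finset X)) (s : X → X → ℝ) : Prop :=
  ∃ lam : ℝ, ∀ x y : X, ¬ SameCluster C x y → s x y = lam

open Filter

theorem sum_erase_div_card_lt {ι : Type*} [DecidableEq ι] {A : Finset ι} {f : ι → ℝ} {y : ι}
    (hy : y ∈ A) (h : ∑ i ∈ A, f i < A.card * f y) :
    (∑ i ∈ A.erase y, f i) / (A.erase y).card < (∑ i ∈ A, f i) / A.card := by
  have hsum := add_sum_erase A f hy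
  have hcard : ((A.erase y).card : ℝ) + 1 = A.card := by exact_mod_cast card_erase_add_one hy
  -- `h` fails for `A = {y}`
  have hpos : 0 < ((A.erase y).card : ℝ) := by
    rcases (A.erase y).eq_empty_or_nonempty with hempty | hne
    · simp only [hempty, sum_empty, card_empty, Nat.cast_zero] at hsum hcard
      rw [← hsum, ← hcard] at h
      linarith
    · exact_mod_cast hne.card_pos
  rw [div_lt_div_iff₀ hpos (by linarith), ← hsum, ← hcard]
  rw [← hsum, ← hcard] at h
  linarith

section Clustering

variable {X : Type*} [DecidableEq X]

theorem eq_of_mem_of_mem_of_pairwise_disjoint {C : Finset (Finset X)}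
    (hdisj : ∀ A ∈ C, ∀ B ∈ C, A ≠ B → Disjoint A B) {A B : Finset X} (hA : A ∈ C) (hB : B ∈ C)
    {p : X} (hpA : p ∈ A) (hpB : p ∈ B) : A = B := by
  by_contra hne
  exact disjoint_left.mp (hdisj A hA B hB hne) hpA hpB

def pointWeight (x : X) (W : ℝ) : X → ℝ := fun z => if z = x then W else 1

variable {x : X} {W : ℝ}

@[simp]
theorem pointWeight_self : pointWeight x W x = W := if_pos rfl

theorem pointWeight_of_ne {z : X} (hz : z ≠ x) : pointWeight x W z = 1 := if_neg hz

theorem pointWeight_nonneg (hW : 0 ≤ W) (z : X) : 0 ≤ pointWeight x W z := by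
  by_cases hz : z = x
  · simpa [hz] using hW
  · simp [pointWeight_of_ne hz]

theorem sum_pointWeight_of_not_mem {A : Finset X} (hA : x ∉ A) :
    ∑ u ∈ A, pointWeight x W u = A.card := by
  rw [sum_congr rfl fun u hu => pointWeight_of_ne (ne_of_mem_of_not_mem hu hA)]
  simp

variable [Fintype X]

def cutWeight (A : Finset X) (w : X → ℝ) (s : X → X → ℝ) : ℝ :=
  ∑ u ∈ A, ∑ v ∈ Aᶜ, s u v * w u * w v

noncomputable def clusterCost (A : Finset X) (w : X → ℝ) (s : X → X → ℝ) : ℝ :=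
  cutWeight A w s / ∑ u ∈ A, w u

theorem rcut_eq_sum_clusterCost (C : Finset (Finset X)) (w : X → ℝ) (s : X → X → ℝ) :
    rcut C w s = 1 / 2 * ∑ A ∈ C, clusterCost A w s := rfl

theorem cutWeight_nonneg {A : Finset X} {w : X → ℝ} {s : X → X → ℝ}
    (hs : ∀ u v, 0 ≤ s u v) (hw : ∀ z, 0 ≤ w z) : 0 ≤ cutWeight A w s :=
  sum_nonneg fun u _ => sum_nonneg fun v _ => mul_nonneg (mul_nonneg (hs u v) (hw u)) (hw v)

theorem clusterCost_nonneg {A : Finset X} {w : X → ℝ} {s : X → X → ℝ}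
    (hs : ∀ u v, 0 ≤ s u v) (hw : ∀ z, 0 ≤ w z) : 0 ≤ clusterCost A w s :=
  div_nonneg (cutWeight_nonneg hs hw) (sum_nonneg fun u _ => hw u)

theorem rcut_replace_lt {C : Finset (Finset X)} {C₁ C₂ B₁ B₂ : Finset X} {w : X → ℝ}
    {s : X → X → ℝ} (hC₁ : C₁ ∈ C) (hC₂ : C₂ ∈ C) (h12 : C₁ ≠ C₂)
    (hB₁ : B₁ ∉ insert B₂ ((C.erase C₁).erase C₂)) (hB₂ : B₂ ∉ (C.erase C₁).erase C₂)
    (h : clusterCost B₁ w s + clusterCost B₂ w s < clusterCost C₁ w s + clusterCost C₂ w s) :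
    rcut (insert B₁ (insert B₂ ((C.erase C₁).erase C₂))) w s < rcut C w s := by
  rw [rcut_eq_sum_clusterCost, rcut_eq_sum_clusterCost, sum_insert hB₁, sum_insert hB₂,
    ← add_sum_erase C _ hC₁, ← add_sum_erase (C.erase C₁) _ (mem_erase.2 ⟨h12.symm, hC₂⟩)]
  linarith

theorem cutWeight_pointWeight_of_not_mem {A : Finset X} (s : X → X → ℝ) (hA : x ∉ A) :
    cutWeight A (pointWeight x W) s
      = W * ∑ u ∈ A, s u x + ∑ u ∈ A, ∑ v ∈ Aᶜ.erase x, s u v := by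
  rw [cutWeight, mul_sum, ← sum_add_distrib]
  refine sum_congr rfl fun u hu => ?_
  rw [← add_sum_erase _ _ (mem_compl.2 hA), pointWeight_of_ne (ne_of_mem_of_not_mem hu hA),
    pointWeight_self]
  congr 1
  · ring
  · refine sum_congr rfl fun v hv => ?_
    rw [pointWeight_of_ne (mem_erase.1 hv).1]
    ring

theorem cutWeight_pointWeight_of_mem {A : Finset X} (s : X → X → ℝ) (hA : x ∈ A) :
    cutWeight A (pointWeight x W) s
      = W * ∑ v ∈ Aᶜ, s x v + ∑ u ∈ A.erase x, ∑ v ∈ Aᶜ, s u v := by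
  have hne : ∀ v ∈ Aᶜ, v ≠ x := fun v hv => ne_of_mem_of_not_mem hA (mem_compl.1 hv) |>.symm
  rw [cutWeight, ← add_sum_erase A _ hA, mul_sum]
  congr 1
  · refine sum_congr rfl fun v hv => ?_
    rw [pointWeight_self, pointWeight_of_ne (hne v hv)]
    ring
  · refine sum_congr rfl fun u hu => sum_congr rfl fun v hv => ?_
    rw [pointWeight_of_ne (mem_erase.1 hu).1, pointWeight_of_ne (hne v hv)]
    ring

theorem clusterCost_pointWeight_of_not_mem {A : Finset X} (s : X → X → ℝ) (hA : x ∉ A) :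
    clusterCost A (pointWeight x W) s
      = W * ((∑ u ∈ A, s u x) / A.card) + (∑ u ∈ A, ∑ v ∈ Aᶜ.erase x, s u v) / A.card := by
  rw [clusterCost, cutWeight_pointWeight_of_not_mem s hA, sum_pointWeight_of_not_mem hA, add_div,
    mul_div_assoc]

theorem clusterCost_pointWeight_le_of_mem {A : Finset X} {s : X → X → ℝ}
    (hs : ∀ u v, 0 ≤ s u v) (hA : x ∈ A) (hW : 1 ≤ W) :
    clusterCost A (pointWeight x W) s
      ≤ ∑ v ∈ Aᶜ, s x v + ∑ u ∈ A.erase x, ∑ v ∈ Aᶜ, s u v := by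
  have hWpos : 0 < W := by linarith
  have hT : 0 ≤ ∑ u ∈ A.erase x, ∑ v ∈ Aᶜ, s u v :=
    sum_nonneg fun u _ => sum_nonneg fun v _ => hs u v
  have hden : W ≤ ∑ u ∈ A, pointWeight x W u := by
    rw [← add_sum_erase A _ hA, pointWeight_self, sum_pointWeight_of_not_mem (notMem_erase x A)]
    simp
  calc clusterCost A (pointWeight x W) s
      ≤ cutWeight A (pointWeight x W) s / W :=
        div_le_div_of_nonneg_left (cutWeight_nonneg hs (pointWeight_nonneg hWpos.le))
          hWpos hden
    _ = ∑ v ∈ Aᶜ, s x v + (∑ u ∈ A.erase x, ∑ v ∈ Aᶜ, s u v) / W := by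
        rw [cutWeight_pointWeight_of_mem s hA, add_div, mul_div_cancel_left₀ _ hWpos.ne']
    _ ≤ _ := by gcongr; exact div_le_self hT hW

theorem eventually_clusterCost_move_lt {s : X → X → ℝ} (hsym : ∀ u v, s u v = s v u)
    (hs : ∀ u v, 0 ≤ s u v) {C₁ C₂ : Finset X} {x y a : X} (hx : x ∈ C₁) (hxC₂ : x ∉ C₂)
    (hy : y ∈ C₂) (hmax : ∀ z ∈ C₂, s x z ≤ s x y) (ha : a ∈ C₂) (hlt : s x a < s x y) :
    ∀ᶠ W in atTop,
      clusterCost (insert y C₁) (pointWeight x W) s + clusterCost (C₂.erase y) (pointWeight x W) s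
        < clusterCost C₁ (pointWeight x W) s + clusterCost C₂ (pointWeight x W) s := by
  have hxB₂ : x ∉ C₂.erase y := fun h => hxC₂ (mem_of_mem_erase h)
  have havg : (∑ u ∈ C₂.erase y, s u x) / (C₂.erase y).card < (∑ u ∈ C₂, s u x) / C₂.card := by
    refine sum_erase_div_card_lt hy ?_
    simp_rw [hsym _ x]
    simpa using sum_lt_sum hmax ⟨a, ha, hlt⟩
  have hgap : Tendsto (fun W => clusterCost C₂ (pointWeight x W) s
      - clusterCost (C₂.erase y) (pointWeight x W) s) atTop atTop := by
    simp_rw [clusterCost_pointWeight_of_not_mem s hxC₂, clusterCost_pointWeight_of_not_mem s hxB₂,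
      add_sub_add_comm, ← mul_sub]
    exact tendsto_atTop_add_const_right _ _ (tendsto_id.atTop_mul_const (sub_pos.2 havg))
  filter_upwards [hgap.eventually_gt_atTop
      (∑ v ∈ (insert y C₁)ᶜ, s x v + ∑ u ∈ (insert y C₁).erase x, ∑ v ∈ (insert y C₁)ᶜ, s u v),
    eventually_ge_atTop 1] with W hgapW hW
  have hB₁ := clusterCost_pointWeight_le_of_mem (s := s) hs (mem_insert_of_mem (b := y) hx) hW
  have hC₁ := clusterCost_nonneg (A := C₁) hs (pointWeight_nonneg (x := x) (zero_le_one.trans hW))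
  linarith

end Clustering

theorem rcut_move_point_improves_general
    {X : Type*} [Fintype X] [DecidableEq X]
    (s : X → X → ℝ) (hsym : ∀ x y, s x y = s y x) (hnn : ∀ x y, 0 ≤ s x y)
    (k : ℕ)
    (C : Finset (Finset X)) (hC : IsClustering C k)
    (C₁ C₂ : Finset X) (hC₁ : C₁ ∈ C) (hC₂ : C₂ ∈ C) (h12 : C₁ ≠ C₂)
    (x y : X) (hx : x ∈ C₁) (hy : y ∈ C₂)
    (hmax : ∀ z ∈ C₂, s x z ≤ s x y)
    (a : X) (ha : a ∈ C₂) (hlt : s x a < s x y) :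
    ∃ W₀ > (0 : ℝ), ∀ W ≥ W₀,
      rcut (insert (insert y C₁) (insert (C₂.erase y) ((C.erase C₁).erase C₂)))
        (fun z => if z = x then W else 1) s
      < rcut C (fun z => if z = x then W else 1) s := by
  obtain ⟨-, -, hdisj, -⟩ := hC
  have hxC₂ : x ∉ C₂ := disjoint_left.mp (hdisj C₁ hC₁ C₂ hC₂ h12) hx
  have haB₂ : a ∈ C₂.erase y := mem_erase.2 ⟨ne_of_apply_ne (s x) hlt.ne, ha⟩
  have hB₂ : C₂.erase y ∉ (C.erase C₁).erase C₂ := fun h => by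
    obtain ⟨hne, -, hB₂C⟩ := by simpa only [mem_erase] using h
    exact hne (eq_of_mem_of_mem_of_pairwise_disjoint hdisj hB₂C hC₂ haB₂ ha)
  have hB₁ : insert y C₁ ∉ insert (C₂.erase y) ((C.erase C₁).erase C₂) := by
    rw [mem_insert, not_or]
    refine ⟨fun h => hxC₂ (mem_of_mem_erase (h ▸ mem_insert_of_mem hx)), fun h => ?_⟩
    obtain ⟨-, hne, hB₁C⟩ := by simpa only [mem_erase] using h
    exact hne (eq_of_mem_of_mem_of_pairwise_disjoint hdisj hB₁C hC₁ (mem_insert_of_mem hx) hx)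
  obtain ⟨W₀, hW₀⟩ := eventually_atTop.1
    ((eventually_clusterCost_move_lt hsym hnn hx hxC₂ hy hmax ha hlt).and (eventually_gt_atTop 0))
  exact ⟨W₀, (hW₀ W₀ le_rfl).2, fun W hW => rcut_replace_lt hC₁ hC₂ h12 hB₁ hB₂ (hW₀ W hW).1⟩

/-- moving `y` from `C₂` to `C₁` strictly decreases the ratio-cut cost once the
weight `W` put on `x` is large enough. -/
theorem rcut_move_point_improves
    {X : Type*} [Fintype X] [DecidableEq X]
    (s : X → X → ℝ) (hsym : ∀ x y, s x y = s y x) (hnn : ∀ x y, 0 ≤ s x y)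
    (k : ℕ) (hk1 : 1 < k) (hk2 : k < Fintype.card X)
    (C : Finset (Finset X)) (hC : IsClustering C k)
    (C₁ C₂ : Finset X) (hC₁ : C₁ ∈ C) (hC₂ : C₂ ∈ C) (h12 : C₁ ≠ C₂)
    (hcard : 2 ≤ C₂.card)
    (x y : X) (hx : x ∈ C₁) (hy : y ∈ C₂)
    (hmax : ∀ z ∈ C₂, s x z ≤ s x y)
    (a : X) (ha : a ∈ C₂) (hlt : s x a < s x y) :
    ∃ W₀ > (0 : ℝ), ∀ W ≥ W₀,
      rcut (insert (insert y C₁) (insert (C₂.erase y) ((C.erase C₁).erase C₂)))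
        (fun z => if z = x then W else 1) s
      < rcut C (fun z => if z = x then W else 1) s :=
  rcut_move_point_improves_general s hsym hnn k C hC C₁ C₂ hC₁ hC₂ h12 x y hx hy hmax a ha hlt
end

section
/- Let C be a k-clustering of (X, s) in which every cluster has at least two points. If C is not separation-uniform, then there exist a weight function w on X and a k-clustering C' of X with rcut(C', w[X], s) < rcut(C, w[X], s); in particular, C does not minimize the ratio-cut objective for the weight function w. -/
open Finset

/-! Put a large weight `M` on one point `p` and weight `1` on all others. Up to an error bounded
independently of `M`, the ratio-cut cost is then `M / 2` times the sum over the clusters avoiding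
`p` of the average similarity between `p` and the cluster. If `C` is not separation-uniform, some
point `p` sees two different similarities across clusters, and moving a single point between two
clusters strictly lowers that sum: either the most similar point of a non-constant cluster joins
`p`, or a point of low similarity joins a cluster of higher average similarity. Both moves keep
`k` clusters because every cluster has at least two points; for `M` large the moved clustering
beats `C`. -/

open scoped BigOperators

section Averages

variable {ι : Type*} [DecidableEq ι] {f : ι → ℝ} {q : ι} {t : Finset ι}

theorem Finset.card_add_one_mul_expect_insert (hq : q ∉ t) :
    (#t + 1 : ℝ) * 𝔼 i ∈ insert q t, f i = f q + #t * 𝔼 i ∈ t, f i := by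
  have h := card_smul_expect (insert q t) f
  rw [card_insert_of_notMem hq, sum_insert hq, ← card_smul_expect t f] at h
  simpa [nsmul_eq_mul] using h

theorem Finset.expect_insert_lt (hq : q ∉ t) (ht : t.Nonempty) (h : f q < 𝔼 i ∈ t, f i) :
    𝔼 i ∈ insert q t, f i < 𝔼 i ∈ t, f i := by
  have key := card_add_one_mul_expect_insert (f := f) hq
  have hcard : (0 : ℝ) < #t := by exact_mod_cast ht.card_pos
  nlinarith

theorem Finset.expect_erase_lt (hq : q ∈ t) (ht : (t.erase q).Nonempty)
    (h : 𝔼 i ∈ t, f i < f q) : 𝔼 i ∈ t.erase q, f i < 𝔼 i ∈ t, f i := by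
  have key := card_add_one_mul_expect_insert (f := f) (notMem_erase q t)
  rw [insert_erase hq] at key
  have hcard : (0 : ℝ) < #(t.erase q) := by exact_mod_cast ht.card_pos
  nlinarith

end Averages

section Clustering

theorem SameCluster.symm {X : Type*} [DecidableEq X] {C : Finset (Finset X)} {x y : X}
    (h : SameCluster C x y) : SameCluster C y x :=
  let ⟨A, hA, hx, hy⟩ := h; ⟨A, hA, hy, hx⟩

variable {X : Type*} [Fintype X] [DecidableEq X] {C : Finset (Finset X)} {k : ℕ}

theorem IsClustering.eq_of_mem_of_mem (hC : IsClustering C k) {A B : Finset X} (hA : A ∈ C)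
    (hB : B ∈ C) {x : X} (hxA : x ∈ A) (hxB : x ∈ B) : A = B := by
  by_contra h
  exact disjoint_left.mp (hC.2.2.1 A hA B hB h) hxA hxB

theorem IsClustering.sameCluster_trans (hC : IsClustering C k) {x y z : X}
    (hxy : SameCluster C x y) (hyz : SameCluster C y z) : SameCluster C x z := by
  obtain ⟨A, hA, hxA, hyA⟩ := hxy
  obtain ⟨B, hB, hyB, hzB⟩ := hyz
  exact ⟨A, hA, hxA, hC.eq_of_mem_of_mem hB hA hyB hyA ▸ hzB⟩

theorem IsClustering.exists_resplit (hC : IsClustering C k) {S T S' T' : Finset X} (hS : S ∈ C)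
    (hT : T ∈ C) (hST : S ≠ T) (hS' : S'.Nonempty) (hT' : T'.Nonempty) (hdisj : Disjoint S' T')
    (hunion : S' ∪ T' = S ∪ T) :
    ∃ C', IsClustering C' k ∧
      ∀ g : Finset X → ℝ,
        ∑ A ∈ C', g A + (g S + g T) = ∑ A ∈ C, g A + (g S' + g T') := by
  set R := (C.erase S).erase T
  have hTS : T ∈ C.erase S := mem_erase.mpr ⟨hST.symm, hT⟩
  have hRC : R ⊆ C := (erase_subset _ _).trans (erase_subset _ _)
  have hRdisj : ∀ D ∈ R, Disjoint (S ∪ T) D := by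
    intro D hD
    obtain ⟨hDT, hDS, hDC⟩ : D ≠ T ∧ D ≠ S ∧ D ∈ C := by simpa [R] using hD
    exact disjoint_union_left.mpr
      ⟨hC.2.2.1 S hS D hDC (Ne.symm hDS), hC.2.2.1 T hT D hDC (Ne.symm hDT)⟩
  have hnotR : ∀ {U : Finset X}, U.Nonempty → U ⊆ S ∪ T → U ∉ R := fun hU hsub hUR =>
    hU.ne_empty (disjoint_self.mp ((hRdisj _ hUR).mono_left hsub))
  have hS'R : S' ∉ R := hnotR hS' (hunion ▸ subset_union_left)
  have hT'R : T' ∉ R := hnotR hT' (hunion ▸ subset_union_right)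
  have hS'T' : S' ∉ insert T' R := by
    rw [mem_insert]
    rintro (h | h)
    · exact hS'.ne_empty (disjoint_self.mp (h ▸ hdisj))
    · exact hS'R h
  refine ⟨insert S' (insert T' R), ⟨?_, ?_, ?_, ?_⟩, fun g => ?_⟩
  · rw [card_insert_of_notMem hS'T', card_insert_of_notMem hT'R, card_erase_add_one hTS,
      card_erase_add_one hS, hC.1]
  · simp only [mem_insert]
    rintro A (rfl | rfl | hA)
    exacts [hS', hT', hC.2.1 A (hRC hA)]
  · have hR : (R : Set (Finset X)).PairwiseDisjoint id :=
      (show (C : Set (Finset X)).PairwiseDisjoint id from hC.2.2.1).subset (by simpa using hRC)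
    have hT'disj : ∀ D ∈ R, Disjoint T' D := fun D hD =>
      (hRdisj D hD).mono_left (hunion ▸ subset_union_right)
    have hS'disj : ∀ D ∈ R, Disjoint S' D := fun D hD =>
      (hRdisj D hD).mono_left (hunion ▸ subset_union_left)
    have h : (↑(insert S' (insert T' R)) : Set (Finset X)).PairwiseDisjoint id := by
      rw [coe_insert, coe_insert]
      refine (hR.insert fun D hD _ => hT'disj D hD).insert fun D hD _ => ?_
      rcases hD with rfl | hD
      exacts [hdisj, hS'disj D hD]
    exact h
  · intro x
    obtain ⟨A, hA, hxA⟩ := hC.2.2.2 x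
    by_cases hAST : A = S ∨ A = T
    · have hx : x ∈ S' ∪ T' := hunion ▸ (by rcases hAST with rfl | rfl <;> simp [hxA])
      rcases mem_union.mp hx with hx | hx
      · exact ⟨S', mem_insert_self _ _, hx⟩
      · exact ⟨T', mem_insert_of_mem (mem_insert_self _ _), hx⟩
    · push Not at hAST
      exact ⟨A, by simp [R, hA, hAST], hxA⟩
  · rw [sum_insert hS'T', sum_insert hT'R, ← add_sum_erase C g hS, ← add_sum_erase _ g hTS]
    ring

theorem IsClustering.exists_move (hC : IsClustering C k) {S T : Finset X} {q : X} (hS : S ∈ C)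
    (hT : T ∈ C) (hST : S ≠ T) (hqS : q ∈ S) (hSq : (S.erase q).Nonempty) :
    ∃ C', IsClustering C' k ∧ ∀ g : Finset X → ℝ,
      ∑ A ∈ C', g A + (g S + g T) = ∑ A ∈ C, g A + (g (S.erase q) + g (insert q T)) := by
  refine hC.exists_resplit hS hT hST hSq (insert_nonempty q T) ?_ ?_
  · exact disjoint_insert_right.mpr
      ⟨notMem_erase q S, (hC.2.2.1 S hS T hT hST).mono_left (erase_subset q S)⟩
  · rw [union_insert, ← insert_union, insert_erase hqS]

theorem IsClustering.exists_sum_lt_of_move (hC : IsClustering C k) {S T : Finset X} {q : X}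
    (hS : S ∈ C) (hT : T ∈ C) (hST : S ≠ T) (hqS : q ∈ S) (hSq : (S.erase q).Nonempty)
    {g : Finset X → ℝ} (hg : g (S.erase q) + g (insert q T) < g S + g T) :
    ∃ C', IsClustering C' k ∧ ∑ A ∈ C', g A < ∑ A ∈ C, g A := by
  obtain ⟨C', hC', hsum⟩ := hC.exists_move hS hT hST hqS hSq
  exact ⟨C', hC', by linarith [hsum g]⟩

theorem IsClustering.exists_lt_of_not_separationUniform (hC : IsClustering C k)
    {s : X → X → ℝ} (hsym : ∀ x y, s x y = s y x) (h : ¬ IsSeparationUniform C s) :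
    ∃ p y z, ¬ SameCluster C p y ∧ ¬ SameCluster C p z ∧ s p y < s p z := by
  by_contra! hrow
  have hconst : ∀ p y z, ¬ SameCluster C p y → ¬ SameCluster C p z → s p y = s p z :=
    fun p y z hy hz => le_antisymm (hrow p z y hz hy) (hrow p y z hy hz)
  apply h
  by_cases hsep : ∃ a b, ¬ SameCluster C a b
  · obtain ⟨a, b, hab⟩ := hsep
    refine ⟨s a b, fun x y hxy => ?_⟩
    by_cases hax : SameCluster C a x
    · have hay : ¬ SameCluster C a y := fun hay => hxy (hC.sameCluster_trans hax.symm hay)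
      calc s x y = s y x := hsym x y
        _ = s y a := hconst y x a (fun h => hxy h.symm) (fun h => hay h.symm)
        _ = s a y := hsym y a
        _ = s a b := hconst a y b hay hab
    · calc s x y = s x a := hconst x y a hxy (fun h => hax h.symm)
        _ = s a x := hsym x a
        _ = s a b := hconst a x b hax hab
  · push Not at hsep
    exact ⟨0, fun x y hxy => absurd (hsep x y) hxy⟩

end Clustering

theorem sum_sum_le_sum_sum_univ {X : Type*} [Fintype X] {s : X → X → ℝ}
    (hnn : ∀ x y, 0 ≤ s x y) (A B : Finset X) :
    ∑ x ∈ A, ∑ y ∈ B, s x y ≤ ∑ x, ∑ y, s x y :=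
  sum_le_sum_of_subset_of_nonneg (subset_univ A) (fun x _ _ => sum_nonneg fun y _ => hnn x y)
    |>.trans' (sum_le_sum fun x _ =>
      sum_le_sum_of_subset_of_nonneg (subset_univ B) fun y _ _ => hnn x y)

section SpikeWeight

variable {X : Type*} [DecidableEq X] {s : X → X → ℝ} {p : X} {M : ℝ}

/-- Up to an error bounded independently of `M`, the coefficient of `M` in the contribution of `A`
to the ratio-cut cost under `spikeWeight p M`. -/
noncomputable def outsideAffinity (s : X → X → ℝ) (p : X) (A : Finset X) : ℝ :=
  if p ∈ A then 0 else 𝔼 x ∈ A, s p x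

def spikeWeight (p : X) (M : ℝ) : X → ℝ := Function.update 1 p M

@[simp] theorem spikeWeight_self : spikeWeight p M p = M := Function.update_self ..

@[simp] theorem spikeWeight_of_ne {x : X} (hx : x ≠ p) : spikeWeight p M x = 1 :=
  Function.update_of_ne hx ..

theorem isWeight_spikeWeight (hM : 0 < M) : IsWeight (spikeWeight p M) := fun x => by
  by_cases hx : x = p
  · simpa [hx] using hM
  · simp [hx]

theorem spikeWeight_nonneg (hM : 0 ≤ M) (x : X) : 0 ≤ spikeWeight p M x := by
  by_cases hx : x = p
  · simpa [hx] using hM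
  · simp [hx]

theorem sum_spikeWeight_of_notMem {A : Finset X} (hpA : p ∉ A) :
    ∑ x ∈ A, spikeWeight p M x = #A := by
  rw [sum_congr rfl fun x hx => spikeWeight_of_ne (ne_of_mem_of_not_mem hx hpA)]
  simp

variable [Fintype X]

noncomputable def cutRatio (w : X → ℝ) (s : X → X → ℝ) (A : Finset X) : ℝ :=
  (∑ x ∈ A, ∑ y ∈ Aᶜ, s x y * w x * w y) / (∑ x ∈ A, w x)

theorem rcut_eq_sum_cutRatio (C : Finset (Finset X)) (w : X → ℝ) :
    rcut C w s = 1 / 2 * ∑ A ∈ C, cutRatio w s A := rfl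

theorem cut_spikeWeight_of_notMem (hsym : ∀ x y, s x y = s y x) {A : Finset X} (hpA : p ∉ A) :
    ∑ x ∈ A, ∑ y ∈ Aᶜ, s x y * spikeWeight p M x * spikeWeight p M y
      = M * ∑ x ∈ A, s p x + ∑ x ∈ A, ∑ y ∈ Aᶜ.erase p, s x y := by
  rw [mul_sum, ← sum_add_distrib]
  refine sum_congr rfl fun x hx => ?_
  have hxp : x ≠ p := ne_of_mem_of_not_mem hx hpA
  rw [← add_sum_erase _ _ (mem_compl.mpr hpA)]
  congr 1
  · simp [hxp, hsym x p, mul_comm]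
  · exact sum_congr rfl fun y hy => by simp [hxp, ne_of_mem_erase hy]

theorem cut_spikeWeight_le_of_mem (hnn : ∀ x y, 0 ≤ s x y) (hM : 0 ≤ M) {A : Finset X}
    (hpA : p ∈ A) :
    ∑ x ∈ A, ∑ y ∈ Aᶜ, s x y * spikeWeight p M x * spikeWeight p M y
      ≤ (∑ x ∈ A, spikeWeight p M x) * ∑ x, ∑ y, s x y := by
  rw [sum_mul]
  refine sum_le_sum fun x _ => ?_
  have hrow : ∑ y ∈ Aᶜ, s x y * spikeWeight p M x * spikeWeight p M y
      = spikeWeight p M x * ∑ y ∈ Aᶜ, s x y := by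
    rw [mul_sum]
    refine sum_congr rfl fun y hy => ?_
    have hyp : y ≠ p := fun h => mem_compl.mp hy (h ▸ hpA)
    rw [spikeWeight_of_ne hyp]
    ring
  rw [hrow]
  exact mul_le_mul_of_nonneg_left (by simpa using sum_sum_le_sum_sum_univ hnn {x} Aᶜ)
    (spikeWeight_nonneg hM x)

theorem cutRatio_nonneg (hnn : ∀ x y, 0 ≤ s x y) {w : X → ℝ} (hw : ∀ x, 0 ≤ w x)
    (A : Finset X) : 0 ≤ cutRatio w s A :=
  div_nonneg (sum_nonneg fun x _ => sum_nonneg fun y _ =>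
    mul_nonneg (mul_nonneg (hnn x y) (hw x)) (hw y)) (sum_nonneg fun x _ => hw x)

section Bounds

variable (hnn : ∀ x y, 0 ≤ s x y) (hsym : ∀ x y, s x y = s y x) (hM : 0 ≤ M)
include hnn hsym hM

theorem mul_outsideAffinity_le_cutRatio (A : Finset X) :
    M * outsideAffinity s p A ≤ cutRatio (spikeWeight p M) s A := by
  unfold outsideAffinity
  split_ifs with hpA
  · rw [mul_zero]
    exact cutRatio_nonneg hnn (spikeWeight_nonneg hM) A
  · have hrest : 0 ≤ ∑ x ∈ A, ∑ y ∈ Aᶜ.erase p, s x y :=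
      sum_nonneg fun x _ => sum_nonneg fun y _ => hnn x y
    rw [cutRatio, cut_spikeWeight_of_notMem hsym hpA, sum_spikeWeight_of_notMem hpA,
      expect_eq_sum_div_card, add_div, mul_div_assoc]
    linarith [div_nonneg hrest (Nat.cast_nonneg #A)]

theorem cutRatio_le_mul_outsideAffinity_add {A : Finset X} (hA : A.Nonempty) :
    cutRatio (spikeWeight p M) s A ≤ M * outsideAffinity s p A + ∑ x, ∑ y, s x y := by
  have hE : 0 ≤ ∑ x, ∑ y, s x y := sum_nonneg fun x _ => sum_nonneg fun y _ => hnn x y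
  unfold outsideAffinity
  split_ifs with hpA
  · rw [mul_zero, zero_add, cutRatio]
    exact div_le_of_le_mul₀ (sum_nonneg fun x _ => spikeWeight_nonneg hM x) hE
      ((cut_spikeWeight_le_of_mem hnn hM hpA).trans_eq (mul_comm _ _))
  · have hrest : 0 ≤ ∑ x ∈ A, ∑ y ∈ Aᶜ.erase p, s x y :=
      sum_nonneg fun x _ => sum_nonneg fun y _ => hnn x y
    have hcard : (1 : ℝ) ≤ #A := by exact_mod_cast hA.card_pos
    rw [cutRatio, cut_spikeWeight_of_notMem hsym hpA, sum_spikeWeight_of_notMem hpA,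
      expect_eq_sum_div_card, add_div, mul_div_assoc]
    linarith [div_le_self hrest hcard, sum_sum_le_sum_sum_univ hnn A (Aᶜ.erase p)]

theorem mul_sum_outsideAffinity_le_rcut (C : Finset (Finset X)) :
    M / 2 * ∑ A ∈ C, outsideAffinity s p A ≤ rcut C (spikeWeight p M) s := by
  rw [rcut_eq_sum_cutRatio, mul_sum, mul_sum]
  exact sum_le_sum fun A _ => by
    linarith [mul_outsideAffinity_le_cutRatio hnn hsym hM (p := p) A]

theorem rcut_le_mul_sum_outsideAffinity_add {C : Finset (Finset X)} (hC : ∀ A ∈ C, A.Nonempty) :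
    rcut C (spikeWeight p M) s
      ≤ M / 2 * ∑ A ∈ C, outsideAffinity s p A + #C / 2 * ∑ x, ∑ y, s x y := by
  have h := sum_le_sum fun A hA =>
    cutRatio_le_mul_outsideAffinity_add hnn hsym hM (p := p) (hC A hA)
  rw [sum_add_distrib, sum_const, nsmul_eq_mul, ← mul_sum] at h
  rw [rcut_eq_sum_cutRatio]
  linarith

end Bounds

end SpikeWeight

section Moves

variable {X : Type*} [DecidableEq X] {s : X → X → ℝ} {p q : X} {S T : Finset X}

theorem outsideAffinity_erase_add_insert_lt_of_mem (hpS : p ∉ S) (hpT : p ∈ T) (hqS : q ∈ S)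
    (hSq : (S.erase q).Nonempty) (h : 𝔼 x ∈ S, s p x < s p q) :
    outsideAffinity s p (S.erase q) + outsideAffinity s p (insert q T)
      < outsideAffinity s p S + outsideAffinity s p T := by
  have hpSq : p ∉ S.erase q := fun h => hpS (mem_of_mem_erase h)
  simp only [outsideAffinity, if_neg hpS, if_neg hpSq, if_pos hpT, if_pos (mem_insert_of_mem hpT),
    add_zero]
  exact expect_erase_lt hqS hSq h

theorem outsideAffinity_erase_add_insert_lt_of_notMem (hpS : p ∉ S) (hpT : p ∉ T)
    (hqS : q ∈ S) (hqT : q ∉ T) (hSq : (S.erase q).Nonempty) (hT : T.Nonempty)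
    (hconst : ∀ x ∈ S, s p x = s p q) (h : s p q < 𝔼 x ∈ T, s p x) :
    outsideAffinity s p (S.erase q) + outsideAffinity s p (insert q T)
      < outsideAffinity s p S + outsideAffinity s p T := by
  have hpSq : p ∉ S.erase q := fun h => hpS (mem_of_mem_erase h)
  have hpqT : p ∉ insert q T := by
    rw [mem_insert]
    rintro (rfl | h)
    exacts [hpS hqS, hpT h]
  have hSq_eq : 𝔼 x ∈ S.erase q, s p x = s p q := by
    rw [expect_congr rfl fun x hx => hconst x (mem_of_mem_erase hx), expect_const hSq]
  have hS_eq : 𝔼 x ∈ S, s p x = s p q := by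
    rw [expect_congr rfl hconst, expect_const ⟨q, hqS⟩]
  simp only [outsideAffinity, if_neg hpS, if_neg hpSq, if_neg hpT, if_neg hpqT, hSq_eq, hS_eq,
    add_lt_add_iff_left]
  exact expect_insert_lt hqT hT h

variable [Fintype X] {C : Finset (Finset X)} {k : ℕ}

theorem IsClustering.exists_sum_outsideAffinity_lt (hC : IsClustering C k)
    (hbig : ∀ A ∈ C, 2 ≤ #A) (hsym : ∀ x y, s x y = s y x)
    (hnsep : ¬ IsSeparationUniform C s) :
    ∃ p C', IsClustering C' k ∧
      ∑ A ∈ C', outsideAffinity s p A < ∑ A ∈ C, outsideAffinity s p A := by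
  obtain ⟨p, y, z, hpy, hpz, hyz⟩ := hC.exists_lt_of_not_separationUniform hsym hnsep
  have hSq : ∀ A ∈ C, ∀ q, (A.erase q).Nonempty := fun A hA _ =>
    (one_lt_card_iff_nontrivial.mp (hbig A hA)).erase_nonempty
  have hout : ∀ {x A}, A ∈ C → x ∈ A → ¬ SameCluster C p x → p ∉ A :=
    fun hA hx hpx hpA => hpx ⟨_, hA, hpA, hx⟩
  obtain ⟨P, hP, hpP⟩ := hC.2.2.2 p
  obtain ⟨D, hD, hyD⟩ := hC.2.2.2 y
  obtain ⟨Y, hY, hzY⟩ := hC.2.2.2 z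
  refine ⟨p, ?_⟩
  by_cases hvar : ∃ A ∈ C, p ∉ A ∧ ∃ u ∈ A, ∃ v ∈ A, s p u < s p v
  · obtain ⟨A, hA, hpA, u, huA, v, hvA, huv⟩ := hvar
    obtain ⟨q, hqA, hqmax⟩ := A.exists_max_image (s p) ⟨u, huA⟩
    refine hC.exists_sum_lt_of_move hA hP (fun h => hpA (h ▸ hpP)) hqA (hSq A hA q) ?_
    exact outsideAffinity_erase_add_insert_lt_of_mem hpA hpP hqA (hSq A hA q)
      (expect_lt hqmax ⟨u, huA, huv.trans_le (hqmax v hvA)⟩)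
  · push Not at hvar
    have hconst : ∀ A ∈ C, p ∉ A → ∀ x ∈ A, ∀ x' ∈ A, s p x = s p x' :=
      fun A hA hpA x hx x' hx' =>
        le_antisymm (hvar A hA hpA x' hx' x hx) (hvar A hA hpA x hx x' hx')
    have hpD := hout hD hyD hpy
    have hpY := hout hY hzY hpz
    have hDY : D ≠ Y := fun h => hyz.ne (hconst D hD hpD y hyD z (h ▸ hzY))
    have hyY : y ∉ Y := fun h => hDY (hC.eq_of_mem_of_mem hD hY hyD h)
    refine hC.exists_sum_lt_of_move hD hY hDY hyD (hSq D hD y) ?_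
    refine outsideAffinity_erase_add_insert_lt_of_notMem hpD hpY hyD hyY (hSq D hD y) ⟨z, hzY⟩
      (fun x hx => hconst D hD hpD x hx y hyD) ?_
    rwa [expect_congr rfl fun x hx => hconst Y hY hpY x hx z hzY, expect_const ⟨z, hzY⟩]

end Moves

theorem rcut_not_minimizer_of_not_separationUniform_general
    {X : Type*} [Fintype X] [DecidableEq X]
    (s : X → X → ℝ) (hsym : ∀ x y, s x y = s y x) (hnn : ∀ x y, 0 ≤ s x y)
    (k : ℕ)
    (C : Finset (Finset X)) (hC : IsClustering C k)
    (hbig : ∀ A ∈ C, 2 ≤ A.card)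
    (hnsep : ¬ IsSeparationUniform C s) :
    ∃ w : X → ℝ, IsWeight w ∧ ∃ C' : Finset (Finset X), IsClustering C' k ∧
      rcut C' w s < rcut C w s := by
  obtain ⟨p, C', hC', hlt⟩ := hC.exists_sum_outsideAffinity_lt hbig hsym hnsep
  set Φ := ∑ A ∈ C, outsideAffinity s p A
  set Φ' := ∑ A ∈ C', outsideAffinity s p A
  set E := ∑ x, ∑ y, s x y
  have hE : 0 ≤ E := sum_nonneg fun x _ => sum_nonneg fun y _ => hnn x y
  have hδ : 0 < Φ - Φ' := sub_pos.mpr hlt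
  -- any `M` with `k * E < M * (Φ - Φ')` works
  set M := (k * E + 1) / (Φ - Φ')
  have hM : 0 < M := by positivity
  have hMδ : M * (Φ - Φ') = k * E + 1 := div_mul_cancel₀ _ hδ.ne'
  refine ⟨spikeWeight p M, isWeight_spikeWeight hM, C', hC', ?_⟩
  calc rcut C' (spikeWeight p M) s ≤ M / 2 * Φ' + k / 2 * E := by
        simpa only [hC'.1] using rcut_le_mul_sum_outsideAffinity_add hnn hsym hM.le hC'.2.1
    _ < M / 2 * Φ := by linarith
    _ ≤ rcut C (spikeWeight p M) s := mul_sum_outsideAffinity_le_rcut hnn hsym hM.le C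

/-- if every cluster of the k-clustering `C` has at least two points and `C` is
not separation-uniform, then for some weight function some k-clustering beats `C` under
ratio-cut, so `C` does not minimize the ratio-cut objective for that weight function. -/
theorem rcut_not_minimizer_of_not_separationUniform
    {X : Type*} [Fintype X] [DecidableEq X]
    (s : X → X → ℝ) (hsym : ∀ x y, s x y = s y x) (hnn : ∀ x y, 0 ≤ s x y)
    (k : ℕ) (hk1 : 1 < k) (hk2 : k < Fintype.card X)
    (C : Finset (Finset X)) (hC : IsClustering C k)
    (hbig : ∀ A ∈ C, 2 ≤ A.card)
    (hnsep : ¬ IsSeparationUniform C s) :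
    ∃ w : X → ℝ, IsWeight w ∧ ∃ C' : Finset (Finset X), IsClustering C' k ∧
      rcut C' w s < rcut C w s :=
  rcut_not_minimizer_of_not_separationUniform_general s hsym hnn k C hC hbig hnsep
end

section
/- If a clustering algorithm is weight-separable then it is weight-responsive: let X be a finite set, let k satisfy 1 < k < |X|, and let A be any function assigning to each weight function w on X a k-clustering A(w) of X. Suppose that for every S ⊆ X with 2 ≤ |S| ≤ k there exists a weight function w such that every two distinct elements of S lie in different clusters of A(w). Then for every weight function w there exists a weight function w' with A(w') ≠ A(w). -/
/-!
Some cluster `B` of `A w` contains two distinct points `x, y`: otherwise the `k` clusters would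
cover the `|X| > k` points with at most one point each. Separability applied to `{x, y}`
(allowed since `2 ≤ k`) yields a weight function `w'` for which `A w'` splits `x` from `y`,
so `A w' ≠ A w`.
-/

open Finset

section Cover

variable {X : Type*} [Fintype X] [DecidableEq X] {C : Finset (Finset X)}

theorem exists_two_le_card_of_cover_of_card_lt (hcov : ∀ x, ∃ B ∈ C, x ∈ B)
    (hC : C.card < Fintype.card X) : ∃ B ∈ C, 2 ≤ B.card := by
  by_contra! hsmall
  have hunion : C.biUnion id = univ :=
    eq_univ_of_forall fun x => mem_biUnion.mpr (hcov x)
  have : Fintype.card X ≤ C.card := calc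
    Fintype.card X = (C.biUnion id).card := by rw [hunion, card_univ]
    _ ≤ ∑ B ∈ C, B.card := card_biUnion_le
    _ ≤ ∑ _B ∈ C, 1 := sum_le_sum fun B hB => Nat.le_of_lt_succ (hsmall B hB)
    _ = C.card := by rw [sum_const, smul_eq_mul, mul_one]
  omega

theorem exists_ne_sameCluster_of_cover_of_card_lt (hcov : ∀ x, ∃ B ∈ C, x ∈ B)
    (hC : C.card < Fintype.card X) : ∃ x y, x ≠ y ∧ SameCluster C x y := by
  obtain ⟨B, hB, hB2⟩ := exists_two_le_card_of_cover_of_card_lt hcov hC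
  obtain ⟨x, hx, y, hy, hxy⟩ := one_lt_card.mp hB2
  exact ⟨x, y, hxy, B, hB, hx, hy⟩

end Cover

/-- if a clustering algorithm `A` (assigning a k-clustering to every weight
function) is weight-separable, then it is weight-responsive: for every weight function `w`
there is a weight function `w'` with `A w' ≠ A w`. -/
theorem weight_responsive_of_weight_separable
    {X : Type*} [Fintype X] [DecidableEq X]
    (k : ℕ) (hk1 : 1 < k) (hk2 : k < Fintype.card X)
    (A : (X → ℝ) → Finset (Finset X))
    (hA : ∀ w : X → ℝ, IsWeight w → IsClustering (A w) k)
    (hsep : ∀ S : Finset X, 2 ≤ S.card → S.card ≤ k →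
      ∃ w : X → ℝ, IsWeight w ∧ ∀ x ∈ S, ∀ y ∈ S, x ≠ y → ¬ SameCluster (A w) x y) :
    ∀ w : X → ℝ, IsWeight w → ∃ w' : X → ℝ, IsWeight w' ∧ A w' ≠ A w := by
  intro w hw
  obtain ⟨hcard, -, -, hcov⟩ := hA w hw
  obtain ⟨x, y, hxy, hsame⟩ := exists_ne_sameCluster_of_cover_of_card_lt hcov (hcard ▸ hk2)
  have hpair : ({x, y} : Finset X).card = 2 := card_pair hxy
  obtain ⟨w', hw', hapart⟩ := hsep {x, y} hpair.ge (hpair ▸ hk1)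
  exact ⟨w', hw', fun heq => hapart x (by simp) y (by simp) hxy (heq ▸ hsame)⟩
end

section
/- Let C = {C_1, …, C_k} be a nice clustering of (X, d) and let w be any weight function on X. For any two distinct clusters C_i, C_j of C, any two disjoint nonempty subsets X_1, X_2 ⊆ C_i, and any nonempty subset X_3 ⊆ C_j, it holds that ℓ_AL(X_1, X_2, d, w) < ℓ_AL(X_1, X_3, d, w). -/
/-! `ℓ_AL(X₁, X₂)` is the `w`-weighted mean over `x ∈ X₁` of the `w`-weighted mean of `d x`
over `X₂`. Niceness puts every `d x y` with `y ∈ X₂` below every `d x z` with `z ∈ X₃`, so for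
each `x` the inner mean over `X₂` is below the one over `X₃` (the maximum of the first family
separates them from the minimum of the second), and averaging over `X₁` keeps the strict
inequality. -/

open Finset

/-- The average-linkage function on disjoint nonempty finite subsets `X₁, X₂`:
`ℓ_AL(X₁, X₂, d, w) = (Σ_{x∈X₁, y∈X₂} d(x,y) w(x) w(y)) / (w(X₁) w(X₂))`. -/
noncomputable def ellAL {X : Type*} (X₁ X₂ : Finset X) (d : X → X → ℝ) (w : X → ℝ) : ℝ :=
  (∑ x ∈ X₁, ∑ y ∈ X₂, d x y * w x * w y) / ((∑ x ∈ X₁, w x) * (∑ y ∈ X₂, w y))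

/-- `C` is nice: every point is strictly closer to every other point of its own cluster
than to any point of another cluster. -/
def IsNice {X : Type*} [DecidableEq X] (C : Finset (Finset X)) (d : X → X → ℝ) : Prop :=
  ∀ x₁ x₂ x₃ : X, SameCluster C x₁ x₂ → x₁ ≠ x₂ → ¬ SameCluster C x₁ x₃ →
    d x₁ x₂ < d x₁ x₃

section CenterMass

variable {ι : Type*} {s t : Finset ι} {w f g : ι → ℝ}

theorem Finset.centerMass_lt_centerMass (hs : s.Nonempty) (hw : ∀ i ∈ s, 0 < w i)
    (hfg : ∀ i ∈ s, f i < g i) : s.centerMass w f < s.centerMass w g := by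
  have hW : 0 < (∑ i ∈ s, w i)⁻¹ := inv_pos.2 (sum_pos hw hs)
  exact smul_lt_smul_of_pos_left
    (sum_lt_sum_of_nonempty hs fun i hi => smul_lt_smul_of_pos_left (hfg i hi) (hw i hi)) hW

theorem Finset.centerMass_lt_centerMass_of_forall_lt (hs : s.Nonempty) (ht : t.Nonempty)
    (hws : ∀ i ∈ s, 0 < w i) (hwt : ∀ i ∈ t, 0 < w i) (hfg : ∀ i ∈ s, ∀ j ∈ t, f i < g j) :
    s.centerMass w f < t.centerMass w g :=
  calc s.centerMass w f
      ≤ s.sup' hs f := centerMass_le_sup (fun i hi => (hws i hi).le) (sum_pos hws hs)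
    _ < t.inf' ht g := (sup'_lt_iff hs).2 fun i hi => (lt_inf'_iff ht).2 (hfg i hi)
    _ ≤ t.centerMass w g := inf_le_centerMass (fun i hi => (hwt i hi).le) (sum_pos hwt ht)

end CenterMass

theorem ellAL_eq_centerMass {X : Type*} (X₁ X₂ : Finset X) (d : X → X → ℝ) (w : X → ℝ) :
    ellAL X₁ X₂ d w = X₁.centerMass w fun x => X₂.centerMass w (d x) := by
  rw [ellAL, centerMass, div_eq_inv_mul, mul_inv, mul_assoc, mul_sum]
  congr 1
  refine sum_congr rfl fun x _ => ?_
  simp only [centerMass, smul_eq_mul, mul_sum]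
  refine sum_congr rfl fun y _ => ?_
  ring

theorem ellAL_lt_ellAL_of_forall_lt {X : Type*} {X₁ X₂ X₃ : Finset X} {d : X → X → ℝ}
    {w : X → ℝ} (hw : IsWeight w) (hX₁ : X₁.Nonempty) (hX₂ : X₂.Nonempty) (hX₃ : X₃.Nonempty)
    (hd : ∀ x ∈ X₁, ∀ y ∈ X₂, ∀ z ∈ X₃, d x y < d x z) :
    ellAL X₁ X₂ d w < ellAL X₁ X₃ d w := by
  rw [ellAL_eq_centerMass, ellAL_eq_centerMass]
  exact centerMass_lt_centerMass hX₁ (fun x _ => hw x) fun x hx =>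
    centerMass_lt_centerMass_of_forall_lt hX₂ hX₃ (fun y _ => hw y) (fun z _ => hw z) (hd x hx)

section Clusters

variable {X : Type*} [DecidableEq X] {C : Finset (Finset X)} {A B : Finset X} {x y z : X}

theorem not_sameCluster_of_mem_of_ne (hC : (C : Set (Finset X)).PairwiseDisjoint id)
    (hA : A ∈ C) (hB : B ∈ C) (hAB : A ≠ B) (hx : x ∈ A) (hy : y ∈ B) :
    ¬ SameCluster C x y := by
  rintro ⟨D, hD, hxD, hyD⟩
  have hDA : D = A := hC.elim hD hA (not_disjoint_iff.2 ⟨x, hxD, hx⟩)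
  have hDB : D = B := hC.elim hD hB (not_disjoint_iff.2 ⟨y, hyD, hy⟩)
  exact hAB (hDA ▸ hDB)

theorem IsNice.lt_of_mem {d : X → X → ℝ} (hnice : IsNice C d)
    (hC : (C : Set (Finset X)).PairwiseDisjoint id) (hA : A ∈ C) (hB : B ∈ C) (hAB : A ≠ B)
    (hx : x ∈ A) (hy : y ∈ A) (hxy : x ≠ y) (hz : z ∈ B) : d x y < d x z :=
  hnice x y z ⟨A, hA, hx, hy⟩ hxy (not_sameCluster_of_mem_of_ne hC hA hB hAB hx hz)

end Clusters

theorem ellAL_lt_of_nice_general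
    {X : Type*} [Fintype X] [DecidableEq X]
    (d : X → X → ℝ)
    (k : ℕ)
    (C : Finset (Finset X)) (hC : IsClustering C k) (hnice : IsNice C d)
    (w : X → ℝ) (hw : IsWeight w)
    (Ci Cj : Finset X) (hCi : Ci ∈ C) (hCj : Cj ∈ C) (hij : Ci ≠ Cj)
    (X₁ X₂ X₃ : Finset X) (hX₁ : X₁.Nonempty) (hX₂ : X₂.Nonempty) (hX₃ : X₃.Nonempty)
    (hX₁i : X₁ ⊆ Ci) (hX₂i : X₂ ⊆ Ci) (h12 : Disjoint X₁ X₂) (hX₃j : X₃ ⊆ Cj) :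
    ellAL X₁ X₂ d w < ellAL X₁ X₃ d w :=
  ellAL_lt_ellAL_of_forall_lt hw hX₁ hX₂ hX₃ fun _ hx _ hy _ hz =>
    hnice.lt_of_mem hC.2.2.1 hCi hCj hij (hX₁i hx) (hX₂i hy)
      (fun hxy => disjoint_left.1 h12 hx (hxy ▸ hy)) (hX₃j hz)

/-- for a nice clustering `C`, any weight function `w`, distinct clusters
`Cᵢ, Cⱼ` of `C`, disjoint nonempty `X₁, X₂ ⊆ Cᵢ`, and nonempty `X₃ ⊆ Cⱼ`, we have
`ℓ_AL(X₁, X₂, d, w) < ℓ_AL(X₁, X₃, d, w)`. -/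
theorem ellAL_lt_of_nice
    {X : Type*} [Fintype X] [DecidableEq X]
    (d : X → X → ℝ) (hsym : ∀ x y, d x y = d y x) (hnn : ∀ x y, 0 ≤ d x y)
    (hzero : ∀ x y, d x y = 0 ↔ x = y)
    (k : ℕ) (hk1 : 1 < k) (hk2 : k < Fintype.card X)
    (C : Finset (Finset X)) (hC : IsClustering C k) (hnice : IsNice C d)
    (w : X → ℝ) (hw : IsWeight w)
    (Ci Cj : Finset X) (hCi : Ci ∈ C) (hCj : Cj ∈ C) (hij : Ci ≠ Cj)
    (X₁ X₂ X₃ : Finset X) (hX₁ : X₁.Nonempty) (hX₂ : X₂.Nonempty) (hX₃ : X₃.Nonempty)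
    (hX₁i : X₁ ⊆ Ci) (hX₂i : X₂ ⊆ Ci) (h12 : Disjoint X₁ X₂) (hX₃j : X₃ ⊆ Cj) :
    ellAL X₁ X₂ d w < ellAL X₁ X₃ d w :=
  ellAL_lt_of_nice_general d k C hC hnice w hw Ci Cj hCi hCj hij X₁ X₂ X₃ hX₁ hX₂ hX₃ hX₁i hX₂i h12
    hX₃j
end

section
/- Let X_1 and X_2 be disjoint nonempty finite subsets of (X, d), let x_1 ∈ X_1 and x_2 ∈ X_2, and for W > 0 let w_W be the weight function with w_W(x_1) = w_W(x_2) = W and w_W(z) = 1 for all other z. Then lim_{W→∞} ℓ_AL(X_1, X_2, d, w_W) = d(x_1, x_2). Moreover, if X_3 is a nonempty subset of X disjoint from X_1 and containing neither x_1 nor x_2, then lim_{W→∞} ℓ_AL(X_1, X_3, d, w_W) = (Σ_{y∈X_3} d(x_1, y)) / |X_3|. -/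
/-!
Average linkage is the mean of `d` under the product of the two normalized weight
distributions `w / w(X₁)` on `X₁` and `w / w(X₂)` on `X₂`, so it depends continuously on them.
As `W → ∞`, the normalized weights on a set containing exactly one heavy point concentrate
on that point, while on a set without heavy points they stay uniform.
-/

open Finset

open Filter Topology

section

variable {X : Type*}

theorem ellAL_eq_sum_mul_div_sum_mul_div_sum (X₁ X₂ : Finset X) (d : X → X → ℝ) (w : X → ℝ) :
    ellAL X₁ X₂ d w =
      ∑ x ∈ X₁, ∑ y ∈ X₂, d x y * (w x / ∑ z ∈ X₁, w z) * (w y / ∑ z ∈ X₂, w z) := by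
  rw [ellAL, div_eq_mul_inv, mul_inv]
  simp only [sum_mul]
  refine sum_congr rfl fun x _ => sum_congr rfl fun y _ => ?_
  ring

theorem tendsto_ellAL {ι : Type*} {l : Filter ι} {X₁ X₂ : Finset X} (d : X → X → ℝ)
    {w : ι → X → ℝ} {a₁ a₂ : X → ℝ}
    (h₁ : ∀ x ∈ X₁, Tendsto (fun i => w i x / ∑ z ∈ X₁, w i z) l (𝓝 (a₁ x)))
    (h₂ : ∀ y ∈ X₂, Tendsto (fun i => w i y / ∑ z ∈ X₂, w i z) l (𝓝 (a₂ y))) :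
    Tendsto (fun i => ellAL X₁ X₂ d (w i)) l (𝓝 (∑ x ∈ X₁, ∑ y ∈ X₂, d x y * a₁ x * a₂ y)) := by
  simp only [ellAL_eq_sum_mul_div_sum_mul_div_sum]
  exact tendsto_finsetSum _ fun x hx => tendsto_finsetSum _ fun y hy =>
    (tendsto_const_nhds.mul (h₁ x hx)).mul (h₂ y hy)

theorem tendsto_add_const_inv_atTop_nhds_zero (m : ℝ) :
    Tendsto (fun W : ℝ => (W + m)⁻¹) atTop (𝓝 0) :=
  (tendsto_atTop_add_const_right _ m tendsto_id).inv_tendsto_atTop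

theorem tendsto_div_add_const_atTop_nhds_one (m : ℝ) :
    Tendsto (fun W : ℝ => W / (W + m)) atTop (𝓝 1) := by
  have hinv := tendsto_add_const_inv_atTop_nhds_zero m
  have hsub : Tendsto (fun W : ℝ => 1 - m * (W + m)⁻¹) atTop (𝓝 1) := by
    simpa using tendsto_const_nhds.sub (hinv.const_mul m)
  refine hsub.congr' ?_
  filter_upwards [eventually_gt_atTop (-m)] with W hW
  field_simp [(by linarith : W + m ≠ 0)]
  ring

section HeavyPoint

variable [DecidableEq X] {s : Finset X} {p : X} {w : ℝ → X → ℝ}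

theorem sum_eq_add_card_erase_of_heavy (hp : p ∈ s)
    (hw : ∀ W, ∀ z ∈ s, w W z = if z = p then W else 1) (W : ℝ) :
    ∑ z ∈ s, w W z = W + #(s.erase p) := by
  rw [← add_sum_erase _ _ hp, hw W p hp, if_pos rfl]
  congr 1
  rw [sum_congr rfl fun z hz => (hw W z (mem_of_mem_erase hz)).trans
    (if_neg (ne_of_mem_erase hz))]
  simp

theorem tendsto_div_sum_of_heavy (hp : p ∈ s)
    (hw : ∀ W, ∀ z ∈ s, w W z = if z = p then W else 1) :
    ∀ x ∈ s, Tendsto (fun W => w W x / ∑ z ∈ s, w W z) atTop (𝓝 (if x = p then 1 else 0)) := by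
  intro x hx
  simp only [sum_eq_add_card_erase_of_heavy hp hw, hw _ x hx]
  split_ifs
  · exact tendsto_div_add_const_atTop_nhds_one _
  · simpa only [one_div] using tendsto_add_const_inv_atTop_nhds_zero _

end HeavyPoint

end

theorem ellAL_tendsto_of_two_heavy_points_general
    {X : Type*} [DecidableEq X]
    (d : X → X → ℝ)
    (X₁ X₂ : Finset X) (hdisj : Disjoint X₁ X₂)
    (x₁ x₂ : X) (hx₁ : x₁ ∈ X₁) (hx₂ : x₂ ∈ X₂) :
    Filter.Tendsto
      (fun W : ℝ => ellAL X₁ X₂ d (fun z => if z = x₁ ∨ z = x₂ then W else 1))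
      Filter.atTop (nhds (d x₁ x₂))
    ∧ ∀ X₃ : Finset X, X₃.Nonempty → Disjoint X₁ X₃ → x₁ ∉ X₃ → x₂ ∉ X₃ →
        Filter.Tendsto
          (fun W : ℝ => ellAL X₁ X₃ d (fun z => if z = x₁ ∨ z = x₂ then W else 1))
          Filter.atTop (nhds ((∑ y ∈ X₃, d x₁ y) / (X₃.card : ℝ))) := by
  have hw₁ : ∀ W : ℝ, ∀ z ∈ X₁, (if z = x₁ ∨ z = x₂ then W else 1) = if z = x₁ then W else 1 :=
    fun W z hz => by
      have : z ≠ x₂ := fun h => disjoint_left.mp hdisj hz (h ▸ hx₂)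
      simp [this]
  have hw₂ : ∀ W : ℝ, ∀ z ∈ X₂, (if z = x₁ ∨ z = x₂ then W else 1) = if z = x₂ then W else 1 :=
    fun W z hz => by
      have : z ≠ x₁ := fun h => disjoint_left.mp hdisj (h ▸ hx₁) hz
      simp [this]
  refine ⟨?_, fun X₃ _ _ hx₁₃ hx₂₃ => ?_⟩
  · convert tendsto_ellAL d (tendsto_div_sum_of_heavy hx₁ hw₁)
      (tendsto_div_sum_of_heavy hx₂ hw₂) using 2
    simp [mul_ite, sum_ite_eq', hx₁, hx₂]
  · have hw₃ : ∀ W : ℝ, ∀ y ∈ X₃, (if y = x₁ ∨ y = x₂ then W else 1) = 1 :=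
      fun W y hy => if_neg (by rintro (rfl | rfl) <;> contradiction)
    have huniform : ∀ y ∈ X₃, Tendsto (fun W : ℝ =>
        (if y = x₁ ∨ y = x₂ then W else 1) / ∑ z ∈ X₃, if z = x₁ ∨ z = x₂ then W else 1)
        atTop (𝓝 (1 / #X₃)) := fun y hy => by
      simp only [hw₃ _ y hy, sum_congr rfl (hw₃ _), sum_const, nsmul_one]
      exact tendsto_const_nhds
    convert tendsto_ellAL d (tendsto_div_sum_of_heavy hx₁ hw₁) huniform using 2
    simp [mul_ite, sum_ite_eq', hx₁, div_eq_mul_inv, sum_mul]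

/-- with weight `W` on `x₁ ∈ X₁` and `x₂ ∈ X₂` and weight `1` elsewhere,
`ℓ_AL(X₁, X₂, d, w_W) → d(x₁,x₂)` as `W → ∞`; and for any nonempty `X₃` disjoint from `X₁`
containing neither `x₁` nor `x₂`, `ℓ_AL(X₁, X₃, d, w_W) → (Σ_{y∈X₃} d(x₁,y)) / |X₃|`. -/
theorem ellAL_tendsto_of_two_heavy_points
    {X : Type*} [DecidableEq X]
    (d : X → X → ℝ) (hsym : ∀ x y, d x y = d y x) (hnn : ∀ x y, 0 ≤ d x y)
    (hzero : ∀ x y, d x y = 0 ↔ x = y)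
    (X₁ X₂ : Finset X) (h₁ : X₁.Nonempty) (h₂ : X₂.Nonempty) (hdisj : Disjoint X₁ X₂)
    (x₁ x₂ : X) (hx₁ : x₁ ∈ X₁) (hx₂ : x₂ ∈ X₂) :
    Filter.Tendsto
      (fun W : ℝ => ellAL X₁ X₂ d (fun z => if z = x₁ ∨ z = x₂ then W else 1))
      Filter.atTop (nhds (d x₁ x₂))
    ∧ ∀ X₃ : Finset X, X₃.Nonempty → Disjoint X₁ X₃ → x₁ ∉ X₃ → x₂ ∉ X₃ →
        Filter.Tendsto
          (fun W : ℝ => ellAL X₁ X₃ d (fun z => if z = x₁ ∨ z = x₂ then W else 1))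
          Filter.atTop (nhds ((∑ y ∈ X₃, d x₁ y) / (X₃.card : ℝ))) :=
  ellAL_tendsto_of_two_heavy_points_general d X₁ X₂ hdisj x₁ x₂ hx₁ hx₂
end
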